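/- Define, for an integer k ≥ 1, the trend c̄_k = -(1/(2π)^2) · Σ_{m=2}^{∞} (Γ(k+1) · Γ(m) / (Γ(k+m+1) · Γ(2m-1))) · (-1)^m · (2π)^(2m) / ζ(2m-1). Then there exists a constant C > 0 such that |c̄_k + (2π)^2 / (2 ζ(3) k^2)| ≤ C / k^3 for all k ≥ 1; that is, c̄_k = -(2π)^2/(2ζ(3)) · k^(-2) + O(k^(-3)) as k → ∞. -/

import Mathlib

open Finset Real

/-- The trend `c̄_k`, the contribution of the trivial zeros of ζ to the explicit
formula for the Báez-Duarte sequence; the summation index `m` runs over `2, 3, 4, …`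
(here reindexed by `m ↦ m + 2`). -/
noncomputable def baezDuarteTrend (k : ℕ) : ℂ :=
  -(1 / (2 * (Real.pi : ℂ)) ^ 2) * ∑' m : ℕ,
    Complex.Gamma (k + 1) * Complex.Gamma ((m : ℂ) + 2) /
        (Complex.Gamma ((k : ℂ) + (m : ℂ) + 3) * Complex.Gamma (2 * (m : ℂ) + 3)) *
      (-1) ^ m * (2 * (Real.pi : ℂ)) ^ (2 * m + 4) / riemannZeta (2 * (m : ℂ) + 3)

/-!
Writing the Gamma quotients as factorials, the `m`-th summand of `c̄_k` is `k!/(k+m+2)!` times a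
quantity of factorial decay in `m` independent of `k`, divided by `ζ(2m+3)`, whose norm is at
least `1`. The summand `m = 0` contributes
`-(2π)²/(2ζ(3)(k+1)(k+2)) = -(2π)²/(2ζ(3)k²) + O(k⁻³)`, and every later one carries a
factor `k!/(k+m+2)! ≤ (k+1)⁻³`.
-/

namespace BaezDuarte

open scoped Nat

lemma one_le_norm_riemannZeta_natCast {n : ℕ} (hn : 1 < n) : 1 ≤ ‖riemannZeta n‖ := by
  have hsum : Summable fun j : ℕ => 1 / ((j : ℝ) + 1) ^ n :=
    (summable_nat_add_iff 1).mpr (Real.summable_one_div_nat_pow.mpr hn) |>.congr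
      fun j => by push_cast; rfl
  have hζ : riemannZeta n = ((∑' j : ℕ, 1 / ((j : ℝ) + 1) ^ n : ℝ) : ℂ) := by
    rw [zeta_eq_tsum_one_div_nat_add_one_cpow (by simpa using hn), Complex.ofReal_tsum]
    push_cast
    simp only [Complex.cpow_natCast]
  rw [hζ, Complex.norm_real, Real.norm_eq_abs]
  calc (1 : ℝ) = 1 / (((0 : ℕ) : ℝ) + 1) ^ n := by simp
    _ ≤ ∑' j : ℕ, 1 / ((j : ℝ) + 1) ^ n := hsum.le_tsum 0 fun j _ => by positivity
    _ ≤ _ := le_abs_self _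

lemma norm_div_riemannZeta_natCast_le (z : ℂ) {n : ℕ} (hn : 1 < n) :
    ‖z / riemannZeta n‖ ≤ ‖z‖ := by
  rw [norm_div]
  exact div_le_self (norm_nonneg z) (one_le_norm_riemannZeta_natCast hn)

noncomputable def majorant (m : ℕ) : ℝ := (2 * π) ^ (2 * m + 4) * (m + 1)! / (2 * m + 2)!

lemma majorant_nonneg (m : ℕ) : 0 ≤ majorant m := by
  unfold majorant; positivity

lemma majorant_le (m : ℕ) :
    majorant m ≤ (2 * π) ^ 2 * (((2 * π) ^ 2) ^ (m + 1) / (m + 1)!) := by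
  have hfac : ((m + 1)! : ℝ) * (m + 1)! ≤ (2 * m + 2)! := by
    have := Nat.le_of_dvd (Nat.factorial_pos _)
      (Nat.factorial_mul_factorial_dvd_factorial_add (m + 1) (m + 1))
    rw [show m + 1 + (m + 1) = 2 * m + 2 by ring] at this
    exact_mod_cast this
  rw [majorant, ← pow_mul, ← mul_div_assoc, ← pow_add,
    show 2 + 2 * (m + 1) = 2 * m + 4 by ring,
    div_le_div_iff₀ (by positivity) (by positivity), mul_assoc]
  gcongr

lemma summable_majorant : Summable majorant :=
  .of_nonneg_of_le majorant_nonneg majorant_le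
    (((summable_nat_add_iff 1).mpr (Real.summable_pow_div_factorial _)).mul_left _)

noncomputable def term (k m : ℕ) : ℂ :=
  Complex.Gamma (k + 1) * Complex.Gamma ((m : ℂ) + 2) /
      (Complex.Gamma ((k : ℂ) + (m : ℂ) + 3) * Complex.Gamma (2 * (m : ℂ) + 3)) *
    (-1) ^ m * (2 * (Real.pi : ℂ)) ^ (2 * m + 4) / riemannZeta (2 * (m : ℂ) + 3)

lemma baezDuarteTrend_eq_tsum (k : ℕ) :
    baezDuarteTrend k = -(1 / (2 * (π : ℂ)) ^ 2) * ∑' m, term k m := rfl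

lemma Gamma_eq_factorial_of_eq {z : ℂ} {n : ℕ} (h : z = n + 1) : Complex.Gamma z = n ! := by
  rw [h, Complex.Gamma_nat_eq_factorial]

lemma term_eq (k m : ℕ) :
    term k m = ((k ! / (k + m + 2)! * majorant m : ℝ) : ℂ) * (-1) ^ m /
      riemannZeta ((2 * m + 3 : ℕ) : ℂ) := by
  rw [term, Gamma_eq_factorial_of_eq (n := k) rfl,
    Gamma_eq_factorial_of_eq (n := m + 1) (by push_cast; ring),
    Gamma_eq_factorial_of_eq (n := k + m + 2) (by push_cast; ring),
    Gamma_eq_factorial_of_eq (n := 2 * m + 2) (by push_cast; ring), majorant]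
  push_cast
  ring

lemma norm_term_le (k m : ℕ) : ‖term k m‖ ≤ k ! / (k + m + 2)! * majorant m := by
  rw [term_eq]
  refine (norm_div_riemannZeta_natCast_le _ (by omega)).trans_eq ?_
  rw [norm_mul, norm_pow, norm_neg, norm_one, one_pow, mul_one, Complex.norm_real,
    Real.norm_of_nonneg (by have := majorant_nonneg m; positivity)]

lemma factorial_div_factorial_le (k m : ℕ) : (k ! / (k + m)! : ℝ) ≤ 1 := by
  rw [div_le_one (by positivity)]
  exact_mod_cast Nat.factorial_le (by omega)

lemma factorial_div_factorial_add_three_le (k m : ℕ) :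
    (k ! / (k + m + 3)! : ℝ) ≤ 1 / (k + 1) ^ 3 := by
  rw [div_le_div_iff₀ (by positivity) (by positivity), one_mul]
  calc (k ! * (k + 1) ^ 3 : ℝ) ≤ (k + 3)! := by
        exact_mod_cast Nat.factorial_mul_pow_le_factorial
    _ ≤ (k + m + 3)! := by exact_mod_cast Nat.factorial_le (by omega)

lemma summable_term (k : ℕ) : Summable (term k) :=
  .of_norm_bounded summable_majorant fun m =>
    (norm_term_le k m).trans <| mul_le_of_le_one_left (majorant_nonneg m)
      (by simpa [add_assoc] using factorial_div_factorial_le k (m + 2))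

lemma norm_tsum_term_succ_le (k : ℕ) :
    ‖∑' m, term k (m + 1)‖ ≤ (∑' m, majorant (m + 1)) / (k + 1) ^ 3 := by
  rw [div_eq_inv_mul, ← tsum_mul_left]
  refine tsum_of_norm_bounded (((summable_nat_add_iff 1).mpr summable_majorant).mul_left _).hasSum
    fun m => (norm_term_le k (m + 1)).trans ?_
  rw [← one_div, show k + (m + 1) + 2 = k + m + 3 by ring]
  exact mul_le_mul_of_nonneg_right (factorial_div_factorial_add_three_le k m) (majorant_nonneg _)

lemma term_zero (k : ℕ) :
    term k 0 = (2 * π) ^ 4 / (2 * riemannZeta 3 * ((k + 1) * (k + 2))) := by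
  have hk : (k ! / (k + 2)! : ℝ) = 1 / ((k + 1) * (k + 2)) := by
    rw [Nat.factorial_succ, Nat.factorial_succ]
    push_cast
    field_simp
    ring
  have hζ : riemannZeta 3 ≠ 0 := riemannZeta_ne_zero_of_one_lt_re (by norm_num)
  rw [term_eq, add_zero, hk, majorant]
  push_cast
  norm_num [Nat.factorial]
  field_simp

lemma baezDuarteTrend_add_eq {k : ℕ} (hk : k ≠ 0) :
    baezDuarteTrend k + (2 * (π : ℂ)) ^ 2 / (2 * riemannZeta 3 * (k : ℂ) ^ 2) =
      (((2 * π) ^ 2 / 2 * (1 / (k : ℝ) ^ 2 - 1 / ((k + 1) * (k + 2))) : ℝ) : ℂ) /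
          riemannZeta (3 : ℕ) -
        (∑' m, term k (m + 1)) / (2 * π) ^ 2 := by
  have hπ : (π : ℂ) ≠ 0 := by exact_mod_cast pi_ne_zero
  have hζ : riemannZeta 3 ≠ 0 := riemannZeta_ne_zero_of_one_lt_re (by norm_num)
  rw [baezDuarteTrend_eq_tsum, (summable_term k).tsum_eq_zero_add, term_zero]
  push_cast
  field_simp
  ring

lemma abs_inv_sq_sub_inv_mul_le {x : ℝ} (hx : 0 < x) :
    |1 / x ^ 2 - 1 / ((x + 1) * (x + 2))| ≤ 3 / x ^ 3 := by
  have hid : 1 / x ^ 2 - 1 / ((x + 1) * (x + 2)) =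
      (3 * x + 2) / (x ^ 2 * ((x + 1) * (x + 2))) := by
    field_simp; ring
  rw [hid, abs_of_nonneg (by positivity), div_le_div_iff₀ (by positivity) (by positivity)]
  nlinarith [pow_pos hx 3, pow_pos hx 2]

end BaezDuarte

open BaezDuarte in
/-- `c̄_k = -(2π)²/(2ζ(3)) k⁻² + O(k⁻³)`. -/
theorem baezDuarteTrend_asymptotic :
    ∃ C : ℝ, 0 < C ∧ ∀ k : ℕ, 1 ≤ k →
      ‖baezDuarteTrend k +
          (2 * (Real.pi : ℂ)) ^ 2 / (2 * riemannZeta 3 * (k : ℂ) ^ 2)‖ ≤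
        C / (k : ℝ) ^ 3 := by
  set D := ∑' m, majorant (m + 1)
  have hD : 0 ≤ D := tsum_nonneg fun m => majorant_nonneg _
  refine ⟨3 * (2 * π) ^ 2 / 2 + D / (2 * π) ^ 2, by positivity, fun k hk => ?_⟩
  have hk0 : (0 : ℝ) < k := by exact_mod_cast hk
  rw [baezDuarteTrend_add_eq (by omega)]
  refine (norm_sub_le _ _).trans ?_
  calc _ ≤ ‖(((2 * π) ^ 2 / 2 * (1 / (k : ℝ) ^ 2 - 1 / ((k + 1) * (k + 2))) : ℝ) : ℂ)‖
          + ‖∑' m, term k (m + 1)‖ / (2 * π) ^ 2 := by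
        refine add_le_add (norm_div_riemannZeta_natCast_le _ (by norm_num)) ?_
        rw [norm_div, norm_pow, norm_mul, Complex.norm_ofNat, Complex.norm_real,
          Real.norm_of_nonneg pi_pos.le]
    _ ≤ (2 * π) ^ 2 / 2 * (3 / k ^ 3) + D / (k + 1) ^ 3 / (2 * π) ^ 2 := by
        rw [Complex.norm_real, norm_mul, Real.norm_of_nonneg (by positivity)]
        gcongr
        · exact abs_inv_sq_sub_inv_mul_le hk0
        · exact norm_tsum_term_succ_le k
    _ ≤ (2 * π) ^ 2 / 2 * (3 / k ^ 3) + D / k ^ 3 / (2 * π) ^ 2 := by gcongr; linarith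
    _ = (3 * (2 * π) ^ 2 / 2 + D / (2 * π) ^ 2) / k ^ 3 := by ring
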